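/- arXiv:math/0610707 — 2 statements merged into one kernel-verified Lean document; each statement's English description precedes it below -/
import Mathlib

section
/- The closure in ℝ^∞ of the set Δ^∞ = {x ∈ ℝ^∞ : Σ x_i = 1, 0 ≤ x_i ≤ 1, and only finitely many x_i are nonzero} equals Δ^∞₀ = {x ∈ ℝ^∞ : Σ_{i=1}^∞ x_i ≤ 1 and 0 ≤ x_i ≤ 1 for all i}. -/
/-!
`Δ^∞₀` is cut out by the closed conditions `0 ≤ x i ≤ 1` and `∑_{i ∈ s} x i ≤ 1` for finite `s`,
so it is closed and contains `Δ^∞`. Conversely, a point of `Δ^∞₀` is the coordinatewise limit of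
the points of `Δ^∞` that keep its first `n` coordinates and put the missing mass
`1 - ∑_{j<n} x j` on coordinate `n`.
-/

open Set Filter Topology

/-- `Δ^∞`: convex combinations of the standard basis vectors, i.e. points with
finitely many nonzero coordinates, all in `[0,1]`, summing to `1`. -/
def DeltaInf : Set (ℕ → ℝ) :=
  {x | (∀ i, 0 ≤ x i ∧ x i ≤ 1) ∧
    ∃ s : Finset ℕ, (∀ i ∉ s, x i = 0) ∧ ∑ i ∈ s, x i = 1}

/-- `Δ^∞₀`: coordinates in `[0,1]` with convergent total sum at most `1`. -/
def DeltaInfZero : Set (ℕ → ℝ) :=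
  {x | (∀ i, 0 ≤ x i ∧ x i ≤ 1) ∧ Summable x ∧ ∑' i, x i ≤ 1}

def simplexTruncation (x : ℕ → ℝ) (n i : ℕ) : ℝ :=
  if i < n then x i else if i = n then 1 - ∑ j ∈ Finset.range n, x j else 0

lemma DeltaInfZero_eq :
    DeltaInfZero = {x : ℕ → ℝ | ∀ i, 0 ≤ x i ∧ x i ≤ 1} ∩
      {x : ℕ → ℝ | ∀ s : Finset ℕ, ∑ i ∈ s, x i ≤ 1} := by
  ext x
  constructor
  · rintro ⟨hx, hsummable, htsum⟩
    exact ⟨hx, fun s => (hsummable.sum_le_tsum s fun i _ => (hx i).1).trans htsum⟩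
  · rintro ⟨hx, hsum⟩
    have hsummable : Summable x := summable_of_sum_le (fun i => (hx i).1) hsum
    exact ⟨hx, hsummable, hsummable.tsum_le_of_sum_le hsum⟩

lemma isClosed_DeltaInfZero : IsClosed DeltaInfZero := by
  rw [DeltaInfZero_eq, ofPred_forall, ofPred_forall]
  refine (isClosed_iInter fun i => ?_).inter (isClosed_iInter fun s => ?_)
  · exact isClosed_Icc.preimage (continuous_apply i)
  · exact isClosed_le (continuous_finsetSum s fun i _ => continuous_apply i) continuous_const

lemma DeltaInf_subset_DeltaInfZero : DeltaInf ⊆ DeltaInfZero := by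
  rintro x ⟨hx, s, hs, hsum⟩
  have hxs : HasSum x 1 := hsum ▸ hasSum_sum_of_ne_finset_zero hs
  exact ⟨hx, hxs.summable, hxs.tsum_eq.le⟩

lemma simplexTruncation_mem_DeltaInf {x : ℕ → ℝ} (hx : ∀ i, 0 ≤ x i ∧ x i ≤ 1)
    (hsum : ∀ n, ∑ j ∈ Finset.range n, x j ≤ 1) (n : ℕ) :
    simplexTruncation x n ∈ DeltaInf := by
  refine ⟨fun i => ?_, Finset.range (n + 1), fun i hi => ?_, ?_⟩
  · have hpos : 0 ≤ ∑ j ∈ Finset.range n, x j := Finset.sum_nonneg fun j _ => (hx j).1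
    unfold simplexTruncation
    split_ifs
    · exact hx i
    · exact ⟨by linarith [hsum n], by linarith⟩
    · exact ⟨le_rfl, zero_le_one⟩
  · rw [Finset.mem_range] at hi
    have hlt : ¬ i < n := by omega
    have hne : i ≠ n := by omega
    simp [simplexTruncation, hlt, hne]
  · have hhead : ∀ j ∈ Finset.range n, simplexTruncation x n j = x j := fun j hj =>
      if_pos (Finset.mem_range.mp hj)
    rw [Finset.sum_range_succ, Finset.sum_congr rfl hhead]
    simp [simplexTruncation]

lemma tendsto_simplexTruncation (x : ℕ → ℝ) :
    Tendsto (simplexTruncation x) atTop (𝓝 x) := by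
  refine tendsto_pi_nhds.mpr fun i => tendsto_const_nhds.congr' ?_
  filter_upwards [eventually_gt_atTop i] with n hn
  exact (if_pos hn).symm

lemma DeltaInfZero_subset_closure_DeltaInf : DeltaInfZero ⊆ closure DeltaInf := by
  intro x hx
  rw [DeltaInfZero_eq] at hx
  exact mem_closure_of_tendsto (tendsto_simplexTruncation x)
    (Eventually.of_forall <| simplexTruncation_mem_DeltaInf hx.1 fun n => hx.2 _)

/-- In the product topology on `ℝ^∞`, the closure of `Δ^∞` is `Δ^∞₀`. -/
theorem closure_DeltaInf_eq_DeltaInfZero : closure DeltaInf = DeltaInfZero :=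
  (closure_minimal DeltaInf_subset_DeltaInfZero isClosed_DeltaInfZero).antisymm
    DeltaInfZero_subset_closure_DeltaInf
end

section
/- The identity map g(x) = x is a homeomorphism from Δ^∞₀ (with the product topology of ℝ^∞) onto Δ^H₀ = {x ∈ H : Σ_{i=1}^∞ x_i ≤ 1 and 0 ≤ x_i ≤ 1} with the topology induced by the norm ‖x‖ = Σ_{i=1}^∞ |x_i|/2^i on H. -/
open Filter

/-- The norm `‖x‖ = ∑_{i=1}^∞ |x_i|/2^i` of `H` (0-indexed, weight `2^(i+1)`). -/
noncomputable def Hnorm (x : ℕ → ℝ) : ℝ := ∑' i : ℕ, |x i| / 2 ^ (i + 1)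

/-- `Δ^H₀`: the copy of the simplex inside `H`. -/
def DeltaHZero : Set (ℕ → ℝ) :=
  {x | (Summable fun i => |x i| / 2 ^ (i + 1)) ∧
    (∀ i, 0 ≤ x i ∧ x i ≤ 1) ∧ Summable x ∧ ∑' i, x i ≤ 1}

open Topology

/-! Coordinates of points of `Δ^∞₀` lie in `[0, 1]`, so differences of such points are bounded
by `1` coordinatewise. For uniformly bounded sequences, coordinatewise convergence is equivalent
to convergence in the weighted norm `Hnorm`: one direction is dominated convergence for series
(with the summable majorant `C / 2^(i+1)`), the other holds because each weighted coordinate is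
bounded by the whole series. -/

lemma summable_abs_div_two_pow_of_abs_le {y : ℕ → ℝ} {C : ℝ} (hy : ∀ i, |y i| ≤ C) :
    Summable fun i => |y i| / 2 ^ (i + 1) := by
  refine (summable_geometric_two' C).of_nonneg_of_le (fun i => by positivity) fun i => ?_
  rw [div_div, ← pow_succ']
  gcongr
  exact hy i

lemma abs_div_two_pow_le_Hnorm {y : ℕ → ℝ} (hy : Summable fun i => |y i| / 2 ^ (i + 1))
    (i : ℕ) : |y i| / 2 ^ (i + 1) ≤ Hnorm y :=
  hy.le_tsum i fun _ _ => by positivity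

lemma tendsto_Hnorm_zero_of_tendsto {α : Type*} {l : Filter α} {v : α → ℕ → ℝ} {C : ℝ}
    (hv : ∀ a i, |v a i| ≤ C) (h : Tendsto v l (𝓝 0)) :
    Tendsto (fun a => Hnorm (v a)) l (𝓝 0) := by
  have hcoord (i : ℕ) : Tendsto (fun a => |v a i| / 2 ^ (i + 1)) l (𝓝 0) := by
    simpa using ((tendsto_pi_nhds.mp h i).abs).div_const ((2 : ℝ) ^ (i + 1))
  have hbound : ∀ᶠ a in l, ∀ i, ‖|v a i| / 2 ^ (i + 1)‖ ≤ C / 2 / 2 ^ i :=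
    Eventually.of_forall fun a i => by
      rw [Real.norm_of_nonneg (by positivity), div_div, ← pow_succ']
      gcongr
      exact hv a i
  simpa [Hnorm] using
    tendsto_tsum_of_dominated_convergence (summable_geometric_two' C) hcoord hbound

lemma tendsto_of_tendsto_Hnorm_zero {α : Type*} {l : Filter α} {v : α → ℕ → ℝ} {C : ℝ}
    (hv : ∀ a i, |v a i| ≤ C) (h : Tendsto (fun a => Hnorm (v a)) l (𝓝 0)) :
    Tendsto v l (𝓝 0) := by
  refine tendsto_pi_nhds.mpr fun i => ?_
  have hweighted : Tendsto (fun a => |v a i| / 2 ^ (i + 1)) l (𝓝 0) :=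
    squeeze_zero (fun _ => by positivity)
      (fun a => abs_div_two_pow_le_Hnorm (summable_abs_div_two_pow_of_abs_le (hv a)) i) h
  have habs : Tendsto (fun a => |v a i|) l (𝓝 0) := by
    simpa [div_mul_cancel₀] using hweighted.mul_const ((2 : ℝ) ^ (i + 1))
  exact (tendsto_zero_iff_abs_tendsto_zero _).mpr habs

lemma tendsto_zero_iff_tendsto_Hnorm_zero {α : Type*} {l : Filter α} {v : α → ℕ → ℝ} {C : ℝ}
    (hv : ∀ a i, |v a i| ≤ C) :
    Tendsto v l (𝓝 0) ↔ Tendsto (fun a => Hnorm (v a)) l (𝓝 0) :=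
  ⟨tendsto_Hnorm_zero_of_tendsto hv, tendsto_of_tendsto_Hnorm_zero hv⟩

lemma DeltaInfZero_eq_DeltaHZero : DeltaInfZero = DeltaHZero := by
  ext x
  refine ⟨fun hx => ⟨?_, hx⟩, fun hx => hx.2⟩
  exact summable_abs_div_two_pow_of_abs_le fun i =>
    abs_le.mpr ⟨by linarith [(hx.1 i).1], (hx.1 i).2⟩

lemma abs_sub_le_one_of_mem_DeltaInfZero {x y : ℕ → ℝ} (hx : x ∈ DeltaInfZero)
    (hy : y ∈ DeltaInfZero) (i : ℕ) : |x i - y i| ≤ 1 :=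
  abs_sub_le_of_nonneg_of_le (hx.1 i).1 (hx.1 i).2 (hy.1 i).1 (hy.1 i).2

/-- The identity map is a homeomorphism from `Δ^∞₀` (product topology)
onto `Δ^H₀` (topology of the norm of `H`): the two sets coincide, and since both
topologies are metrizable, convergence of sequences in the product topology
agrees with convergence in the `H`-norm. -/
theorem id_homeo_DeltaInfZero_DeltaHZero :
    DeltaInfZero = DeltaHZero ∧
    ∀ (u : ℕ → (ℕ → ℝ)) (x : ℕ → ℝ), (∀ n, u n ∈ DeltaInfZero) → x ∈ DeltaInfZero →
      (Tendsto u atTop (nhds x) ↔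
        Tendsto (fun n => Hnorm (u n - x)) atTop (nhds 0)) := by
  refine ⟨DeltaInfZero_eq_DeltaHZero, fun u x hu hx => ?_⟩
  rw [← tendsto_sub_nhds_zero_iff]
  exact tendsto_zero_iff_tendsto_Hnorm_zero fun n i =>
    abs_sub_le_one_of_mem_DeltaInfZero (hu n) hx i
end
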